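/- arXiv:2205.06038 — 2 statements merged into one kernel-verified Lean document; each statement's English description precedes it below -/
import Mathlib

section
/- Let S_2 be the set of pairs (λ, μ) of strict partitions with ℓ(λ) ≥ μ_1. Then ∑_{(λ,μ)∈S_2} x^{ℓ(λ)+ℓ(μ)} q^{|λ|+|μ|} = ∑_{i,j≥0} q^{i(i+1)/2 + 2·j(j+1)/2 + i·j} x^{i+2j} / ((q;q)_i (q;q)_j). -/
open Finset PowerSeries

/-- A strict partition: a strictly decreasing finite list of positive integers. -/
structure StrictPartition where
  parts : List ℕ
  pos : ∀ p ∈ parts, 0 < p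
  sorted : parts.Pairwise (· > ·)

namespace StrictPartition

/-- The size `|λ|`. -/
def size (μ : StrictPartition) : ℕ := μ.parts.sum

/-- The number of parts `ℓ(λ)`. -/
def len (μ : StrictPartition) : ℕ := μ.parts.length

/-- The largest part `λ₁` (`0` if `λ` is empty). -/
def first (μ : StrictPartition) : ℕ := μ.parts.headI

end StrictPartition

/-- `(q;q)_n = ∏_{0 ≤ j < n} (1 - q^{j+1})`. -/
noncomputable def qPoch (n : ℕ) : PowerSeries ℚ :=
  ∏ j ∈ Finset.range n, (1 - (PowerSeries.X : PowerSeries ℚ) ^ (j + 1))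

/-!
Encode a strict partition by the finite set `s ⊆ ℕ` of its parts minus one. Then `ℓ = #s`,
the size is `∑_{x ∈ s} (x + 1)`, and `μ₁ ≤ ℓ(λ)` says that `μ` is encoded by a subset of
`range ℓ(λ)`. Splitting by `ℓ(λ) = i + j` and `ℓ(μ) = j`, the generating function factors as
`q^{(i+j)(i+j+1)/2} / (q;q)_{i+j}` (strict partitions with `i + j` parts: subtract one from every
part) times `q^{j(j+1)/2} (q;q)_{i+j} / ((q;q)_i (q;q)_j)` (the `q`-Pascal recursion for
`j`-subsets of `range (i + j)`).
-/

section WeightGF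

variable {α β ι : Type*}

/-- `∑_{x, p x} q ^ w x`, a power series in `q`. -/
noncomputable def weightGF (w : α → ℕ) (p : α → Prop) : PowerSeries ℚ :=
  mk fun N => Nat.card {x // p x ∧ w x = N}

variable {w : α → ℕ}

lemma finite_weight_fiber (hw : ∀ N, {x | w x = N}.Finite) (p : α → Prop) (N : ℕ) :
    Finite {x // p x ∧ w x = N} :=
  ((hw N).subset fun _ hx => hx.2).to_subtype

lemma weightGF_congr_equiv {w' : β → ℕ} {p : α → Prop} {q : β → Prop}
    (e : α ≃ β) (hw : ∀ x, w' (e x) = w x) (hp : ∀ x, q (e x) ↔ p x) :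
    weightGF w' q = weightGF w p := by
  ext N
  simp only [weightGF, coeff_mk]
  exact congrArg _ (Nat.card_congr (e.subtypeEquiv fun x => by rw [hp, hw]).symm)

lemma finite_weight_le (hw : ∀ N, {x | w x = N}.Finite) (N : ℕ) :
    {x | w x ≤ N}.Finite :=
  ((Set.finite_Iic N).biUnion fun u _ => hw u).subset fun x hx => by simpa using hx

lemma finite_add_weight_eq {w₁ : α → ℕ} {w₂ : β → ℕ}
    (hw₁ : ∀ N, {x | w₁ x = N}.Finite) (hw₂ : ∀ N, {y | w₂ y = N}.Finite) (N : ℕ) :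
    {z : α × β | w₁ z.1 + w₂ z.2 = N}.Finite := by
  refine ((finite_weight_le hw₁ N).prod (finite_weight_le hw₂ N)).subset fun z (hz : _ = N) => ?_
  simp only [Set.mem_prod, Set.mem_ofPred_eq]
  omega

lemma weightGF_or (hw : ∀ N, {x | w x = N}.Finite) {p q : α → Prop} (hpq : ∀ x, p x → ¬ q x) :
    weightGF w (fun x => p x ∨ q x) = weightGF w p + weightGF w q := by
  classical
  ext N
  have := finite_weight_fiber hw p N
  have := finite_weight_fiber hw q N
  simp only [weightGF, coeff_mk, map_add, ← Nat.cast_add, ← Nat.card_sum]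
  congr 1
  refine Nat.card_congr ((Equiv.subtypeEquivRight fun x => or_and_right).trans
    (subtypeOrEquiv _ _ ?_))
  rw [Pi.disjoint_iff]
  intro x
  simp only [Prop.disjoint_iff]
  exact fun ⟨⟨hp, _⟩, hq, _⟩ => hpq x hp hq

lemma weightGF_and_mem_eq_sum (hw : ∀ N, {x | w x = N}.Finite) [DecidableEq ι] (p : α → Prop)
    (f : α → ι) (S : Finset ι) :
    weightGF w (fun x => p x ∧ f x ∈ S) = ∑ b ∈ S, weightGF w (fun x => p x ∧ f x = b) := by
  induction S using Finset.induction_on with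
  | empty => ext; simp [weightGF]
  | insert b S hb ih =>
    rw [sum_insert hb, ← ih, ← weightGF_or hw]
    · simp only [mem_insert, and_or_left]
    · rintro x ⟨_, rfl⟩ ⟨_, h⟩
      exact hb h

lemma weightGF_image {w' : β → ℕ} {p : α → Prop} (f : α → β) (hf : Function.Injective f)
    (c : ℕ) (hfw : ∀ x, p x → w' (f x) = w x + c) :
    weightGF w' (fun y => ∃ x, p x ∧ f x = y) = X ^ c * weightGF w p := by
  ext N
  rw [coeff_X_pow_mul', weightGF, weightGF, coeff_mk]
  split_ifs with hc
  · rw [coeff_mk]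
    congr 1
    refine (Nat.card_congr (Equiv.ofBijective (fun x => ⟨f x, ⟨x, x.2.1, rfl⟩, by
      rw [hfw _ x.2.1, x.2.2]; omega⟩) ⟨?_, ?_⟩)).symm
    · exact fun x y hxy => Subtype.ext (hf (congrArg Subtype.val hxy))
    · rintro ⟨_, ⟨x, hx, rfl⟩, hN⟩
      exact ⟨⟨x, hx, by rw [hfw x hx] at hN; omega⟩, rfl⟩
  · have : IsEmpty {y // (∃ x, p x ∧ f x = y) ∧ w' y = N} :=
      ⟨fun ⟨_, ⟨x, hx, hfx⟩, hN⟩ => hc (by rw [← hfx, hfw x hx] at hN; omega)⟩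
    simp

lemma weightGF_prod {w₁ : α → ℕ} {w₂ : β → ℕ} (hw₁ : ∀ N, {x | w₁ x = N}.Finite)
    (hw₂ : ∀ N, {y | w₂ y = N}.Finite) (p : α → Prop) (q : β → Prop) :
    weightGF (fun z : α × β => w₁ z.1 + w₂ z.2) (fun z => p z.1 ∧ q z.2)
      = weightGF w₁ p * weightGF w₂ q := by
  ext N
  have := finite_weight_fiber hw₁ p
  have := finite_weight_fiber hw₂ q
  simp only [weightGF, coeff_mul, coeff_mk, ← Nat.cast_mul, ← Nat.cast_sum, ← Nat.card_prod]
  rw [← sum_coe_sort, ← Nat.card_sigma]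
  congr 1
  refine Nat.card_congr
    { toFun := fun z => ⟨⟨(w₁ z.1.1, w₂ z.1.2), mem_antidiagonal.2 z.2.2⟩,
        ⟨z.1.1, z.2.1.1, rfl⟩, ⟨z.1.2, z.2.1.2, rfl⟩⟩
      invFun := fun y => ⟨(y.2.1.1, y.2.2.1), ⟨y.2.1.2.1, y.2.2.2.1⟩, by
        rw [y.2.1.2.2, y.2.2.2.2]; exact mem_antidiagonal.1 y.1.2⟩
      left_inv := fun z => rfl
      right_inv := ?_ }
  rintro ⟨⟨⟨u, v⟩, huv⟩, ⟨x, hx, hxu⟩, ⟨y, hy, hyv⟩⟩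
  simp only at hxu hyv
  subst hxu hyv
  rfl

lemma weightGF_mem_finset (F : Finset α) : weightGF w (· ∈ F) = ∑ x ∈ F, X ^ w x := by
  ext N
  simp only [weightGF, coeff_mk, map_sum, coeff_X_pow, sum_boole]
  rw [← Nat.card_eq_finsetCard]
  congr 1
  exact Nat.card_congr (Equiv.subtypeEquivRight fun x => by simp [eq_comm])

end WeightGF

theorem List.Pairwise.headI_le_iff {l : List ℕ} (hl : l.Pairwise (· > ·)) {a : ℕ} :
    l.headI ≤ a ↔ ∀ x ∈ l, x ≤ a := by
  cases l with
  | nil => simp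
  | cons y l =>
    simp only [List.headI_cons, List.mem_cons, forall_eq_or_imp]
    exact ⟨fun h => ⟨h, fun x hx => (((List.pairwise_cons.1 hl).1 x hx).le).trans h⟩, And.left⟩

def succSum (s : Finset ℕ) : ℕ := ∑ x ∈ s, (x + 1)

lemma finite_succSum_eq (N : ℕ) : {s : Finset ℕ | succSum s = N}.Finite := by
  refine (range N).powerset.finite_toSet.subset fun s hs => ?_
  simp only [coe_powerset, Set.mem_preimage, Set.mem_powerset_iff, coe_subset]
  intro x hx
  have := single_le_sum (fun y _ => Nat.zero_le (y + 1)) hx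
  rw [Set.mem_ofPred_eq, succSum] at hs
  exact mem_range.2 (by omega)

lemma succSum_map_succ (t : Finset ℕ) :
    succSum (t.map (addRightEmbedding 1)) = succSum t + t.card := by
  simp [succSum, sum_add_distrib]

lemma succSum_range (b : ℕ) : succSum (range b) = b * (b + 1) / 2 := by
  have h := sum_range_succ' (fun i => i) b
  rw [sum_range_id, add_zero, Nat.add_sub_cancel, mul_comm] at h
  exact h.symm

namespace StrictPartition

def ofFinset (s : Finset ℕ) : StrictPartition where
  parts := (s.sort (· ≥ ·)).map (· + 1)
  pos := by simp
  sorted := by simpa [List.pairwise_map] using (s.sortedGT_sort).pairwise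

lemma len_ofFinset (s : Finset ℕ) : (ofFinset s).len = s.card := by
  simp [len, ofFinset]

lemma size_ofFinset (s : Finset ℕ) : (ofFinset s).size = succSum s := by
  rw [size, ofFinset, ← List.sum_toFinset _ (s.sort_nodup _), sort_toFinset, succSum]

lemma first_ofFinset_le_iff (s : Finset ℕ) (a : ℕ) : (ofFinset s).first ≤ a ↔ s ⊆ range a := by
  rw [first, (ofFinset s).sorted.headI_le_iff]
  simp only [ofFinset, List.forall_mem_map, mem_sort]
  exact ⟨fun h x hx => mem_range.2 (h x hx), fun h x hx => mem_range.1 (h hx)⟩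

lemma ofFinset_bijective : Function.Bijective ofFinset := by
  refine ⟨fun s t hst => ?_, fun ⟨parts, pos, sorted⟩ => ?_⟩
  · have h := congrArg (fun μ : StrictPartition => (μ.parts.map (· - 1)).toFinset) hst
    simpa [ofFinset, Function.comp_def] using h
  · have hsorted : (parts.map (· - 1)).Pairwise (· > ·) :=
      List.pairwise_map.2 (sorted.imp_of_mem fun _ hb hab => by have := pos _ hb; omega)
    have hsort : (parts.map (· - 1)).toFinset.sort (· ≥ ·) = parts.map (· - 1) :=
      (List.toFinset_sort _ hsorted.nodup).2 (hsorted.imp le_of_lt)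
    refine ⟨(parts.map (· - 1)).toFinset, ?_⟩
    simp only [ofFinset, hsort, List.map_map, mk.injEq]
    exact (List.map_congr_left fun x hx => by have := pos x hx; simp; omega).trans parts.map_id

noncomputable def finsetEquiv : Finset ℕ ≃ StrictPartition := Equiv.ofBijective _ ofFinset_bijective

end StrictPartition

lemma triangle_succ (b : ℕ) : (b + 1) * (b + 1 + 1) / 2 = b * (b + 1) / 2 + (b + 1) := by
  rw [show (b + 1) * (b + 1 + 1) = b * (b + 1) + (b + 1) * 2 by ring,
    Nat.add_mul_div_right _ _ two_pos]

lemma triangle_add (i j : ℕ) :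
    (i + j) * (i + j + 1) / 2 + j * (j + 1) / 2 = i * (i + 1) / 2 + j * (j + 1) + i * j := by
  obtain ⟨x, hx⟩ := Nat.even_mul_succ_self i
  obtain ⟨y, hy⟩ := Nat.even_mul_succ_self j
  have h : (i + j) * (i + j + 1) = i * (i + 1) + j * (j + 1) + 2 * (i * j) := by ring
  rw [h, hx, hy]
  generalize i * j = m
  omega

lemma qPoch_zero : qPoch 0 = 1 := prod_range_zero _

lemma qPoch_succ (n : ℕ) : qPoch (n + 1) = qPoch n * (1 - X ^ (n + 1)) := prod_range_succ _ _

lemma constantCoeff_qPoch (n : ℕ) : constantCoeff (qPoch n) = 1 := by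
  simp [qPoch, map_prod]

lemma qPoch_ne_zero (n : ℕ) : qPoch n ≠ 0 := fun h => by
  simpa [h] using constantCoeff_qPoch n

lemma exists_map_succ_eq_erase_zero (s : Finset ℕ) :
    ∃ t : Finset ℕ, t.map (addRightEmbedding 1) = s.erase 0 := by
  refine ⟨(s.erase 0).image (· - 1), ?_⟩
  ext x
  simp only [mem_map, mem_image, mem_erase, addRightEmbedding_apply]
  constructor
  · rintro ⟨_, ⟨y, ⟨hy0, hy⟩, rfl⟩, rfl⟩
    rw [Nat.sub_add_cancel (Nat.pos_of_ne_zero hy0)]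
    exact ⟨hy0, hy⟩
  · rintro ⟨hx0, hx⟩
    exact ⟨x - 1, ⟨x, ⟨hx0, hx⟩, rfl⟩, by omega⟩

lemma card_eq_succ_iff_map_succ (s : Finset ℕ) (a : ℕ) : s.card = a + 1 ↔
    (∃ t : Finset ℕ, t.card = a + 1 ∧ t.map (addRightEmbedding 1) = s) ∨
    (∃ t : Finset ℕ, t.card = a ∧ insert 0 (t.map (addRightEmbedding 1)) = s) := by
  constructor
  · intro hs
    obtain ⟨t, ht⟩ := exists_map_succ_eq_erase_zero s
    by_cases h0 : 0 ∈ s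
    · refine Or.inr ⟨t, ?_, by rw [ht, insert_erase h0]⟩
      rw [← card_map (addRightEmbedding 1), ht, card_erase_of_mem h0, hs, Nat.add_sub_cancel]
    · rw [erase_eq_of_notMem h0] at ht
      exact Or.inl ⟨t, by rw [← card_map (addRightEmbedding 1), ht, hs], ht⟩
  · rintro (⟨t, ht, rfl⟩ | ⟨t, ht, rfl⟩)
    · rw [card_map, ht]
    · rw [card_insert_of_notMem (by simp), card_map, ht]

noncomputable def strictGF (a : ℕ) : PowerSeries ℚ := weightGF succSum (fun s => s.card = a)

lemma strictGF_succ (a : ℕ) :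
    strictGF (a + 1) = X ^ (a + 1) * (strictGF (a + 1) + strictGF a) := by
  have hshift : weightGF succSum
      (fun s => ∃ t : Finset ℕ, t.card = a + 1 ∧ t.map (addRightEmbedding 1) = s)
        = X ^ (a + 1) * strictGF (a + 1) :=
    weightGF_image _ (map_injective _) _ fun t ht => by rw [succSum_map_succ, ht]
  have hshift_insert : weightGF succSum
      (fun s => ∃ t : Finset ℕ, t.card = a ∧ insert 0 (t.map (addRightEmbedding 1)) = s)
        = X ^ (a + 1) * strictGF a := by
    refine weightGF_image _ (fun t u htu => map_injective (addRightEmbedding 1) ?_) _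
      fun t ht => ?_
    · simpa using congrArg (·.erase 0) htu
    · rw [succSum, sum_insert (by simp), ← succSum, succSum_map_succ, ht]
      ring
  rw [mul_add, ← hshift, ← hshift_insert, ← weightGF_or finite_succSum_eq]
  · exact congrArg _ (funext fun s => propext (card_eq_succ_iff_map_succ s a))
  · rintro s ⟨t, -, rfl⟩ ⟨u, -, htu⟩
    simpa using congrArg (0 ∈ ·) htu

lemma strictGF_zero : strictGF 0 = 1 := by
  rw [strictGF, show (fun s : Finset ℕ => s.card = 0) = (· ∈ ({∅} : Finset (Finset ℕ))) by
    simp [card_eq_zero], weightGF_mem_finset]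
  simp [succSum]

lemma strictGF_mul_qPoch (a : ℕ) : strictGF a * qPoch a = X ^ (a * (a + 1) / 2) := by
  induction a with
  | zero => simp [strictGF_zero, qPoch_zero]
  | succ a ih =>
    rw [qPoch_succ, triangle_succ, pow_add]
    linear_combination qPoch a * strictGF_succ a + X ^ (a + 1) * ih

noncomputable def subsetGF (a b : ℕ) : PowerSeries ℚ :=
  ∑ s ∈ (range a).powersetCard b, X ^ succSum s

lemma weightGF_subset_range (a b : ℕ) :
    weightGF succSum (fun s => s ⊆ range a ∧ s.card = b) = subsetGF a b := by
  simp [subsetGF, ← weightGF_mem_finset, mem_powersetCard]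

lemma subsetGF_zero_right (a : ℕ) : subsetGF a 0 = 1 := by
  simp [subsetGF, succSum]

lemma subsetGF_self (b : ℕ) : subsetGF b b = X ^ (b * (b + 1) / 2) := by
  have h := powersetCard_self (range b)
  rw [card_range] at h
  rw [subsetGF, h, sum_singleton, succSum_range]

lemma subsetGF_of_lt {a b : ℕ} (h : a < b) : subsetGF a b = 0 := by
  rw [subsetGF, powersetCard_eq_empty.2 (by rwa [card_range]), sum_empty]

lemma subsetGF_succ_succ (a b : ℕ) :
    subsetGF (a + 1) (b + 1) = subsetGF a (b + 1) + X ^ (a + 1) * subsetGF a b := by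
  have ha : ∀ {k} {s : Finset ℕ}, s ∈ (range a).powersetCard k → a ∉ s :=
    fun hs h => notMem_range_self ((mem_powersetCard.1 hs).1 h)
  rw [subsetGF, range_add_one, powersetCard_succ_insert notMem_range_self, sum_union, sum_image,
    subsetGF, subsetGF, mul_sum]
  · refine congrArg _ (sum_congr rfl fun s hs => ?_)
    rw [succSum, sum_insert (ha hs), ← succSum, pow_add, mul_comm, add_comm]
  · intro s hs t ht hst
    rw [← erase_insert (ha hs), hst, erase_insert (ha ht)]
  · refine disjoint_left.2 fun s hs hs' => ?_
    obtain ⟨t, -, rfl⟩ := mem_image.1 hs'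
    exact ha hs (mem_insert_self a t)

lemma subsetGF_add_mul (b c : ℕ) :
    subsetGF (b + c) b * qPoch b * qPoch c = X ^ (b * (b + 1) / 2) * qPoch (b + c) := by
  induction b generalizing c with
  | zero => simp [subsetGF_zero_right, qPoch_zero]
  | succ b ihb =>
    induction c with
    | zero => rw [add_zero, subsetGF_self, qPoch_zero, mul_one]
    | succ c ihc =>
      have hb := ihb (c + 1)
      rw [show b + (c + 1) = b + 1 + c by ring, qPoch_succ c] at hb
      rw [qPoch_succ b, triangle_succ] at ihc
      rw [show b + 1 + (c + 1) = b + 1 + c + 1 by ring, subsetGF_succ_succ,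
        qPoch_succ (b + 1 + c), qPoch_succ b, qPoch_succ c, triangle_succ]
      linear_combination (1 - X ^ (c + 1)) * ihc + X ^ (b + 1 + c + 1) * (1 - X ^ (b + 1)) * hb

lemma weightGF_pairs (n : ℕ) :
    weightGF (fun z : Finset ℕ × Finset ℕ => succSum z.1 + succSum z.2)
        (fun z => z.2 ⊆ range z.1.card ∧ z.1.card + z.2.card = n)
      = ∑ j ∈ range (n / 2 + 1), strictGF (n - j) * subsetGF (n - j) j := by
  have hbound : ∀ z : Finset ℕ × Finset ℕ, z.2 ⊆ range z.1.card ∧ z.1.card + z.2.card = n ↔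
      (z.2 ⊆ range z.1.card ∧ z.1.card + z.2.card = n) ∧ z.2.card ∈ range (n + 1) :=
    fun z => ⟨fun h => ⟨h, mem_range.2 (by omega)⟩, And.left⟩
  rw [funext fun z => propext (hbound z),
    weightGF_and_mem_eq_sum (finite_add_weight_eq finite_succSum_eq finite_succSum_eq),
    sum_subset (range_subset_range.2 (by omega : n / 2 + 1 ≤ n + 1))]
  · refine sum_congr rfl fun b hb => ?_
    have hbn := mem_range.1 hb
    rw [strictGF, ← weightGF_subset_range, ← weightGF_prod finite_succSum_eq finite_succSum_eq]
    congr 1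
    ext ⟨s, t⟩
    dsimp only
    constructor
    · rintro ⟨⟨hts, hn⟩, rfl⟩
      have hs : s.card = n - t.card := by omega
      exact ⟨hs, hs ▸ hts, rfl⟩
    · rintro ⟨hs, hts, rfl⟩
      exact ⟨⟨hs ▸ hts, by omega⟩, rfl⟩
  · intro b hb hb'
    rw [subsetGF_of_lt (by simp at hb hb'; omega), mul_zero]

lemma strictGF_mul_subsetGF (i j : ℕ) :
    strictGF (i + j) * subsetGF (i + j) j
      = X ^ (i * (i + 1) / 2 + j * (j + 1) + i * j) * (qPoch i)⁻¹ * (qPoch j)⁻¹ := by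
  rw [eq_mul_inv_iff_mul_eq (by simp [constantCoeff_qPoch]),
    eq_mul_inv_iff_mul_eq (by simp [constantCoeff_qPoch])]
  refine mul_right_cancel₀ (qPoch_ne_zero (i + j)) ?_
  have hsub := subsetGF_add_mul j i
  rw [add_comm j i] at hsub
  calc strictGF (i + j) * subsetGF (i + j) j * qPoch j * qPoch i * qPoch (i + j)
      = (strictGF (i + j) * qPoch (i + j)) * (subsetGF (i + j) j * qPoch j * qPoch i) := by ring
    _ = X ^ ((i + j) * (i + j + 1) / 2) * (X ^ (j * (j + 1) / 2) * qPoch (i + j)) := by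
      rw [strictGF_mul_qPoch, hsub]
    _ = X ^ (i * (i + 1) / 2 + j * (j + 1) + i * j) * qPoch (i + j) := by
      rw [← triangle_add, pow_add]
      ring

/-- `∑_{(λ,μ) ∈ S₂} x^{ℓ(λ)+ℓ(μ)} q^{|λ|+|μ|}
  = ∑_{i,j ≥ 0} q^{i(i+1)/2 + j(j+1) + ij} x^{i+2j} / ((q;q)_i (q;q)_j)`,
where `S₂` is the set of pairs of strict partitions with `μ₁ ≤ ℓ(λ)`.
Both sides are power series in `x` with coefficients power series in `q`;
the right-hand coefficient of `x^n` sums over all `i, j ≥ 0` with `i + 2j = n`. -/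
theorem S2_gf :
    (PowerSeries.mk (fun n => PowerSeries.mk (fun N =>
        (Nat.card {p : StrictPartition × StrictPartition //
          p.2.first ≤ p.1.len ∧ p.1.len + p.2.len = n ∧
          p.1.size + p.2.size = N} : ℚ))) : PowerSeries (PowerSeries ℚ)) =
      PowerSeries.mk (fun n => ∑ j ∈ Finset.range (n / 2 + 1),
        (PowerSeries.X : PowerSeries ℚ) ^
            ((n - 2 * j) * (n - 2 * j + 1) / 2 + j * (j + 1) + (n - 2 * j) * j) *
          (qPoch (n - 2 * j))⁻¹ * (qPoch j)⁻¹) := by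
  ext n : 1
  rw [coeff_mk, coeff_mk]
  calc _ = weightGF (fun p : StrictPartition × StrictPartition => p.1.size + p.2.size)
        (fun p => p.2.first ≤ p.1.len ∧ p.1.len + p.2.len = n) := by
        ext N
        simp only [weightGF, coeff_mk, and_assoc]
    _ = weightGF (fun z : Finset ℕ × Finset ℕ => succSum z.1 + succSum z.2)
        (fun z => z.2 ⊆ range z.1.card ∧ z.1.card + z.2.card = n) :=
      weightGF_congr_equiv (StrictPartition.finsetEquiv.prodCongr StrictPartition.finsetEquiv)
        (fun z => by simp [StrictPartition.finsetEquiv, StrictPartition.size_ofFinset])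
        (fun z => by simp [StrictPartition.finsetEquiv, StrictPartition.len_ofFinset,
          StrictPartition.first_ofFinset_le_iff])
    _ = ∑ j ∈ range (n / 2 + 1), strictGF (n - j) * subsetGF (n - j) j := weightGF_pairs n
    _ = _ := sum_congr rfl fun j hj => by
      obtain ⟨i, rfl⟩ : ∃ i, n = i + 2 * j := ⟨n - 2 * j, by have := mem_range.1 hj; omega⟩
      rw [show i + 2 * j - j = i + j by omega, show i + 2 * j - 2 * j = i by omega,
        strictGF_mul_subsetGF]
end

section
/- Euler's identity: (−xq; q)_∞ = ∑_{m≥0} q^{m(m+1)/2} x^m / (q;q)_m as formal power series, where (−xq;q)_∞ = ∏_{j≥0}(1 + x q^{j+1}) and (q;q)_m = ∏_{0≤j<m}(1−q^{j+1}). -/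
open Finset PowerSeries

/-- The power series `q` in `ℚ⟦q⟧`. -/
noncomputable def qq : PowerSeries ℚ := PowerSeries.X

/-- The infinite product `(-xq; q)_∞ = ∏_{j ≥ 0} (1 + x q^{j+1})` in `ℚ⟦q⟧⟦x⟧`,
defined coefficientwise: the coefficient of `x^m q^N` is that of any partial
product with more than `N` factors (these stabilize). -/
noncomputable def eulerProd : PowerSeries (PowerSeries ℚ) :=
  PowerSeries.mk fun m => PowerSeries.mk fun N =>
    PowerSeries.coeff (R := ℚ) N (PowerSeries.coeff (R := PowerSeries ℚ) m
      (∏ j ∈ Finset.range (N + 1), (1 + PowerSeries.C (R := PowerSeries ℚ) (qq ^ (j + 1)) * PowerSeries.X)))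

theorem triangle_add_one (n : ℕ) : (n + 1) * (n + 1 + 1) / 2 = n * (n + 1) / 2 + (n + 1) := by
  simpa [Nat.mul_comm] using Nat.triangle_succ (n + 1)

section

variable {A : Type*} [CommRing A]

theorem dvd_prod_range_sub_prod_range {a : A} {u : ℕ → A} {n n' : ℕ}
    (hu : ∀ j, n ≤ j → a ∣ u j - 1) (hn : n ≤ n') :
    a ∣ ∏ j ∈ range n', u j - ∏ j ∈ range n, u j := by
  obtain ⟨k, rfl⟩ := Nat.exists_eq_add_of_le hn
  induction k with
  | zero => simp
  | succ k ih =>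
    have hsplit : ∏ j ∈ range (n + (k + 1)), u j - ∏ j ∈ range n, u j =
        (∏ j ∈ range (n + k), u j - ∏ j ∈ range n, u j) +
          (∏ j ∈ range (n + k), u j) * (u (n + k) - 1) := by
      rw [← add_assoc, prod_range_succ]; ring
    rw [hsplit]
    exact dvd_add (ih (by omega)) (dvd_mul_of_dvd_right (hu _ (by omega)) _)

end

section

variable (R : Type*) [CommRing R]

noncomputable def qPochhammer (n : ℕ) : R⟦X⟧ :=
  ∏ j ∈ range n, (1 - X ^ (j + 1))

noncomputable def eulerPartialProd (n : ℕ) : R⟦X⟧⟦X⟧ :=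
  ∏ j ∈ range n, (1 + C (X ^ (j + 1)) * X)

variable {R}

theorem qPochhammer_succ (n : ℕ) :
    qPochhammer R (n + 1) = qPochhammer R n * (1 - X ^ (n + 1)) :=
  prod_range_succ _ _

theorem constantCoeff_qPochhammer (n : ℕ) : constantCoeff (qPochhammer R n) = 1 := by
  simp [qPochhammer, map_prod]

theorem X_pow_dvd_qPochhammer_sub {n n' : ℕ} (h : n ≤ n') :
    X ^ (n + 1) ∣ qPochhammer R n' - qPochhammer R n :=
  dvd_prod_range_sub_prod_range
    (fun j hj => by simpa using (pow_dvd_pow X (by omega : n + 1 ≤ j + 1)).neg_right) h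

theorem eulerPartialProd_succ (n : ℕ) :
    eulerPartialProd R (n + 1) = eulerPartialProd R n * (1 + C (X ^ (n + 1)) * X) :=
  prod_range_succ _ _

theorem coeff_zero_eulerPartialProd (n : ℕ) : coeff 0 (eulerPartialProd R n) = 1 := by
  simp [eulerPartialProd, coeff_zero_eq_constantCoeff, map_prod]

theorem coeff_succ_eulerPartialProd_succ (n m : ℕ) :
    coeff (m + 1) (eulerPartialProd R (n + 1)) =
      coeff (m + 1) (eulerPartialProd R n) + X ^ (n + 1) * coeff m (eulerPartialProd R n) := by
  rw [eulerPartialProd_succ, mul_add, mul_one, mul_left_comm, map_add, coeff_C_mul,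
    coeff_succ_mul_X]

theorem coeff_eulerPartialProd_of_lt {n m : ℕ} (h : n < m) :
    coeff m (eulerPartialProd R n) = 0 := by
  induction n generalizing m with
  | zero => simp [eulerPartialProd, coeff_one, h.ne']
  | succ n ih =>
    obtain ⟨m, rfl⟩ := Nat.exists_eq_add_one_of_ne_zero (by omega : m ≠ 0)
    rw [coeff_succ_eulerPartialProd_succ, ih (by omega), ih (by omega), mul_zero, add_zero]

theorem coeff_eulerPartialProd_self (n : ℕ) :
    coeff n (eulerPartialProd R n) = X ^ (n * (n + 1) / 2) := by
  induction n with
  | zero => simp [coeff_zero_eulerPartialProd]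
  | succ n ih =>
    rw [coeff_succ_eulerPartialProd_succ, ih, coeff_eulerPartialProd_of_lt n.lt_succ_self,
      ← pow_add, triangle_add_one, zero_add, add_comm]

theorem coeff_eulerPartialProd_add_mul_qPochhammer (m k : ℕ) :
    coeff m (eulerPartialProd R (m + k)) * qPochhammer R m * qPochhammer R k =
      X ^ (m * (m + 1) / 2) * qPochhammer R (m + k) := by
  induction m generalizing k with
  | zero => simp [coeff_zero_eulerPartialProd, qPochhammer]
  | succ m ihm =>
    induction k with
    | zero => simp [coeff_eulerPartialProd_self, qPochhammer]
    | succ k ihk =>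
      have hk := ihm (k + 1)
      rw [← add_assoc, add_right_comm] at hk
      rw [← add_assoc, coeff_succ_eulerPartialProd_succ]
      simp only [qPochhammer_succ, triangle_add_one] at ihk hk ⊢
      linear_combination (1 - X ^ (k + 1)) * ihk + X ^ (m + k + 2) * (1 - X ^ (m + 1)) * hk

theorem X_pow_dvd_coeff_eulerPartialProd_sub {n n' : ℕ} (h : n ≤ n') (m : ℕ) :
    X ^ (n + 1) ∣ coeff m (eulerPartialProd R n') - coeff m (eulerPartialProd R n) := by
  have hu : ∀ j, n ≤ j → (C (X ^ (n + 1)) : R⟦X⟧⟦X⟧) ∣ 1 + C (X ^ (j + 1)) * X - 1 := fun j hj => by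
    rw [add_sub_cancel_left]
    exact (map_dvd C (pow_dvd_pow X (by omega))).mul_right _
  obtain ⟨g, hg⟩ := dvd_prod_range_sub_prod_range hu h
  rw [← map_sub, eulerPartialProd, eulerPartialProd, hg, coeff_C_mul]
  exact dvd_mul_right _ _

end

section

variable {K : Type*} [Field K]

theorem X_pow_dvd_coeff_eulerPartialProd_sub_mul_inv (m N : ℕ) :
    X ^ (N + 1) ∣ coeff m (eulerPartialProd K (m + N)) -
      X ^ (m * (m + 1) / 2) * (qPochhammer K m)⁻¹ := by
  have hm := PowerSeries.mul_inv_cancel (qPochhammer K m) (by simp [constantCoeff_qPochhammer])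
  have hN := PowerSeries.mul_inv_cancel (qPochhammer K N) (by simp [constantCoeff_qPochhammer])
  have key := coeff_eulerPartialProd_add_mul_qPochhammer (R := K) m N
  set c := coeff m (eulerPartialProd K (m + N))
  have hdiff : c - X ^ (m * (m + 1) / 2) * (qPochhammer K m)⁻¹ =
      X ^ (m * (m + 1) / 2) * (qPochhammer K (m + N) - qPochhammer K N) *
        ((qPochhammer K m)⁻¹ * (qPochhammer K N)⁻¹) := by
    linear_combination ((qPochhammer K m)⁻¹ * (qPochhammer K N)⁻¹) * key
      - c * qPochhammer K N * (qPochhammer K N)⁻¹ * hm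
      + (X ^ (m * (m + 1) / 2) * (qPochhammer K m)⁻¹ - c) * hN
  rw [hdiff]
  exact ((X_pow_dvd_qPochhammer_sub (Nat.le_add_left N m)).mul_left _).mul_right _

theorem coeff_coeff_eulerPartialProd {N n : ℕ} (h : N < n) (m : ℕ) :
    coeff N (coeff m (eulerPartialProd K n)) =
      coeff N (X ^ (m * (m + 1) / 2) * (qPochhammer K m)⁻¹) := by
  have hdvd := ((X_pow_dvd_coeff_eulerPartialProd_sub (R := K) h.le m).sub
    (X_pow_dvd_coeff_eulerPartialProd_sub (Nat.le_add_left N m) m)).add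
    (X_pow_dvd_coeff_eulerPartialProd_sub_mul_inv m N)
  rw [sub_sub_sub_cancel_right, sub_add_sub_cancel] at hdvd
  rw [← sub_eq_zero, ← map_sub]
  exact X_pow_dvd_iff.mp hdvd N N.lt_succ_self

end

/-- Euler's identity: `(-xq;q)_∞ = ∑_{m ≥ 0} q^{m(m+1)/2} x^m / (q;q)_m`. -/
theorem euler_identity :
    eulerProd = PowerSeries.mk fun m => qq ^ (m * (m + 1) / 2) * (qPoch m)⁻¹ := by
  ext m N
  rw [eulerProd, coeff_mk, coeff_mk, coeff_mk]
  exact coeff_coeff_eulerPartialProd (K := ℚ) N.lt_succ_self m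
end
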